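/- For 0 < q < 1 and n ≥ 1, the sum S(n) = 2 ∑_{m=1}^{n} ∑_{k_1 + ⋯ + k_m = n, k_i ≥ 1} [k_1+1]_q² ⋯ [k_m+1]_q² satisfies S(n) ≤ 2 q^{-2n} · q^{-2}/(q^{-1}-q)² · (1 + 1/(1-q²)²)^{n-1}. -/

import Mathlib

noncomputable def qnum (q : ℝ) (n : ℕ) : ℝ := (q⁻¹ ^ n - q ^ n) / (q⁻¹ - q)

noncomputable def S (q : ℝ) (n : ℕ) : ℝ :=
  2 * ∑ c : Composition n, (c.blocks.map (fun k => qnum q (k + 1) ^ 2)).prod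

/-- Key combinatorial fact: the subset of `Fin (n-1)` associated to a `CompositionAsSet n`
has cardinality `length - 1`, i.e. `card + 1 = length` (for `n ≥ 1`). -/
lemma card_compositionAsSetEquiv (n : ℕ) (hn : 1 ≤ n) (d : CompositionAsSet n) :
    (compositionAsSetEquiv n d).card + 1 = d.length := by
  have hcard : (compositionAsSetEquiv n d).card + 2 = d.boundaries.card := by
    classical
    have hsub : ({0, Fin.last n} : Finset (Fin (n + 1))) ⊆ d.boundaries := by
      intro x hx
      simp only [Finset.mem_insert, Finset.mem_singleton] at hx
      rcases hx with rfl | rfl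
      · exact d.zero_mem
      · exact d.getLast_mem
    have hzero_ne : (0 : Fin (n + 1)) ≠ Fin.last n := by
      simp [Fin.ext_iff]; omega
    have hpair : ({0, Fin.last n} : Finset (Fin (n + 1))).card = 2 := by
      rw [Finset.card_insert_of_notMem (by simpa using hzero_ne), Finset.card_singleton]
    have hbij : (compositionAsSetEquiv n d).card =
        (d.boundaries \ ({0, Fin.last n} : Finset (Fin (n + 1)))).card := by
      apply Finset.card_bij (fun (i : Fin (n - 1)) _ =>
        (⟨1 + (i : ℕ), by omega⟩ : Fin (n + 1)))
      · intro i hi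
        simp only [compositionAsSetEquiv, Equiv.coe_fn_mk, Set.toFinset_setOf,
          Finset.mem_filter, Finset.mem_univ, true_and] at hi
        have hilt : (i : ℕ) < n - 1 := i.2
        simp only [Finset.mem_sdiff, Finset.mem_insert, Finset.mem_singleton]
        refine ⟨hi, ?_⟩
        simp only [Fin.ext_iff, Fin.val_zero, Fin.val_last, not_or]
        constructor <;> · show ¬(1 + (i : ℕ) = _); omega
      · intro i hi j hj hij
        have : (1 + (i : ℕ)) = (1 + (j : ℕ)) := by
          simpa [Fin.ext_iff] using hij
        exact Fin.ext (by omega)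
      · intro j hj
        simp only [Finset.mem_sdiff, Finset.mem_insert, Finset.mem_singleton, not_or] at hj
        obtain ⟨hjb, hj0, hjl⟩ := hj
        have hj0' : (j : ℕ) ≠ 0 := fun h => hj0 (Fin.ext (by simpa using h))
        have hjl' : (j : ℕ) ≠ n := fun h => hjl (Fin.ext (by simpa [Fin.last] using h))
        have hjlt : (j : ℕ) < n + 1 := j.2
        refine ⟨⟨(j : ℕ) - 1, by omega⟩, ?_, ?_⟩
        · simp only [compositionAsSetEquiv, Equiv.coe_fn_mk, Set.toFinset_setOf,
            Finset.mem_filter]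
          refine ⟨Finset.mem_univ _, ?_⟩
          have : (⟨1 + ((j : ℕ) - 1), by omega⟩ : Fin (n + 1)) = j := Fin.ext (by simp; omega)
          rwa [this]
        · exact Fin.ext (by simp; omega)
    have hsdiff : (d.boundaries \ ({0, Fin.last n} : Finset (Fin (n + 1)))).card
        = d.boundaries.card - 2 := by
      rw [Finset.card_sdiff_of_subset hsub, hpair]
    have hge : 2 ≤ d.boundaries.card := by
      calc 2 = ({0, Fin.last n} : Finset (Fin (n + 1))).card := hpair.symm
        _ ≤ d.boundaries.card := Finset.card_le_card hsub
    omega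
  have := d.card_boundaries_eq_succ_length
  omega

/-- The generating identity: sum over compositions of `x ^ length`. -/
lemma sum_pow_length (n : ℕ) (hn : 1 ≤ n) (x : ℝ) :
    ∑ c : Composition n, x ^ c.length = x * (1 + x) ^ (n - 1) := by
  classical
  have h1 : ∑ c : Composition n, x ^ c.length
      = ∑ d : CompositionAsSet n, x ^ d.length := by
    apply Fintype.sum_equiv (compositionEquiv n)
    intro c
    rw [show ((compositionEquiv n) c).length = c.length from c.toCompositionAsSet_length]
  have h2 : ∑ d : CompositionAsSet n, x ^ d.length
      = ∑ s : Finset (Fin (n - 1)), x ^ (s.card + 1) := by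
    apply Fintype.sum_equiv (compositionAsSetEquiv n)
    intro d
    rw [card_compositionAsSetEquiv n hn d]
  rw [h1, h2]
  have h3 : ∑ s : Finset (Fin (n - 1)), x ^ s.card = (1 + x) ^ (n - 1) := by
    have h := Finset.prod_add (fun _ : Fin (n - 1) => x) (fun _ => (1 : ℝ)) Finset.univ
    simp only [Finset.prod_const, one_pow, mul_one, Finset.card_univ,
      Fintype.card_fin, Finset.powerset_univ] at h
    rw [show (1 : ℝ) + x = x + 1 by ring, ← h]
  calc ∑ s : Finset (Fin (n - 1)), x ^ (s.card + 1)
      = x * ∑ s : Finset (Fin (n - 1)), x ^ s.card := by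
        rw [Finset.mul_sum]; congr 1; ext s; ring
    _ = x * (1 + x) ^ (n - 1) := by rw [h3]

theorem stmt_15 (q : ℝ) (hq : 0 < q) (hq1 : q < 1) (n : ℕ) (hn : 1 ≤ n) :
    S q n ≤ 2 * q⁻¹ ^ (2 * n) * (q⁻¹ ^ 2 / (q⁻¹ - q) ^ 2) *
      (1 + 1 / (1 - q ^ 2) ^ 2) ^ (n - 1) := by
  have hq0 : q ≠ 0 := ne_of_gt hq
  have hqinv : 1 < q⁻¹ := (one_lt_inv₀ hq).mpr hq1
  have hd : 0 < q⁻¹ - q := by linarith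
  set C : ℝ := q⁻¹ ^ 2 / (q⁻¹ - q) ^ 2 with hC
  have hCpos : 0 < C := by positivity
  -- C = 1 / (1 - q^2)^2
  have hCeq : C = 1 / (1 - q ^ 2) ^ 2 := by
    rw [hC]
    have h1q2 : (0 : ℝ) < 1 - q ^ 2 := by nlinarith
    rw [div_eq_div_iff (by positivity) (by positivity)]
    field_simp
  -- per-block bound
  have hblock : ∀ k : ℕ, qnum q (k + 1) ^ 2 ≤ q⁻¹ ^ (2 * k) * C := by
    intro k
    have h1 : 0 ≤ q⁻¹ ^ (k + 1) - q ^ (k + 1) := by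
      have : q ^ (k + 1) ≤ 1 := pow_le_one₀ hq.le hq1.le
      have : (1 : ℝ) ≤ q⁻¹ ^ (k + 1) := one_le_pow₀ hqinv.le
      linarith [pow_le_one₀ hq.le hq1.le (n := k + 1)]
    have h2 : q⁻¹ ^ (k + 1) - q ^ (k + 1) ≤ q⁻¹ ^ (k + 1) := by
      have : 0 ≤ q ^ (k + 1) := by positivity
      linarith
    have h3 : qnum q (k + 1) ≤ q⁻¹ ^ (k + 1) / (q⁻¹ - q) := by
      unfold qnum
      gcongr
    have h4 : 0 ≤ qnum q (k + 1) := div_nonneg h1 hd.le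
    calc qnum q (k + 1) ^ 2 ≤ (q⁻¹ ^ (k + 1) / (q⁻¹ - q)) ^ 2 := by
          apply pow_le_pow_left₀ h4 h3
      _ = q⁻¹ ^ (2 * k) * C := by
          rw [hC, div_pow, ← pow_mul]
          rw [show (k + 1) * 2 = 2 * k + 2 by ring, pow_add]
          ring
  -- per-composition bound
  have hcomp : ∀ c : Composition n,
      (c.blocks.map (fun k => qnum q (k + 1) ^ 2)).prod ≤ q⁻¹ ^ (2 * n) * C ^ c.length := by
    intro c
    have hprod : (c.blocks.map (fun k => qnum q (k + 1) ^ 2)).prod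
        = ∏ i : Fin c.length, qnum q (c.blocksFun i + 1) ^ 2 := by
      conv_lhs => rw [← c.ofFn_blocksFun, List.map_ofFn]
      rw [List.prod_ofFn]
      rfl
    rw [hprod]
    calc ∏ i : Fin c.length, qnum q (c.blocksFun i + 1) ^ 2
        ≤ ∏ i : Fin c.length, q⁻¹ ^ (2 * c.blocksFun i) * C := by
          apply Finset.prod_le_prod
          · intro i _; positivity
          · intro i _; exact hblock _
      _ = (∏ i : Fin c.length, q⁻¹ ^ (2 * c.blocksFun i)) * C ^ c.length := by
          rw [Finset.prod_mul_distrib, Finset.prod_const, Finset.card_univ, Fintype.card_fin]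
      _ = q⁻¹ ^ (2 * n) * C ^ c.length := by
          rw [Finset.prod_pow_eq_pow_sum, ← Finset.mul_sum, c.sum_blocksFun]
  -- sum everything
  have hsum : ∑ c : Composition n, (c.blocks.map (fun k => qnum q (k + 1) ^ 2)).prod
      ≤ q⁻¹ ^ (2 * n) * (C * (1 + C) ^ (n - 1)) := by
    calc ∑ c : Composition n, (c.blocks.map (fun k => qnum q (k + 1) ^ 2)).prod
        ≤ ∑ c : Composition n, q⁻¹ ^ (2 * n) * C ^ c.length :=
          Finset.sum_le_sum fun c _ => hcomp c
      _ = q⁻¹ ^ (2 * n) * ∑ c : Composition n, C ^ c.length := by rw [Finset.mul_sum]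
      _ = q⁻¹ ^ (2 * n) * (C * (1 + C) ^ (n - 1)) := by rw [sum_pow_length n hn C]
  rw [S]
  rw [← hCeq]
  calc 2 * ∑ c : Composition n, (c.blocks.map (fun k => qnum q (k + 1) ^ 2)).prod
      ≤ 2 * (q⁻¹ ^ (2 * n) * (C * (1 + C) ^ (n - 1))) := by linarith
    _ = 2 * q⁻¹ ^ (2 * n) * C * (1 + C) ^ (n - 1) := by ring
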